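/- arXiv:1604.02503 — 11 statements merged into one kernel-verified Lean document; each statement's English description precedes it below -/
import Mathlib

section
/- For every λ > 0 and every interval I = (x-r, x+r) ∩ (0,∞) with x, r > 0, the measure m_λ(E) = ∫_E y^{2λ} dy satisfies m_λ(2I) ≥ min(2, 2^{2λ}) · m_λ(I). -/
open MeasureTheory Set

/-!
Write p = 2λ and f(t) = ((x + t)₊)^p. After the shift y = x + t the two measures are
∫_{-r}^{r} f and ∫_{-2r}^{2r} f, and folding at 0 and substituting t = 2s reduce the claim to the
pointwise inequality min(2, 2^p) (f(s) + f(-s)) ≤ 2 (f(2s) + f(-2s)). A convex g satisfies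
g(s) + g(-s) ≤ g(2s) + g(-2s). For p ≥ 1 apply this to f itself. For p ≤ 1 apply it to
t ↦ (x + t)₊, so that a + b ≤ A + B for the truncated endpoints, and conclude with concavity and
subadditivity of u ↦ u^p: 2^p (a^p + b^p) ≤ 2 (a + b)^p ≤ 2 (A + B)^p ≤ 2 (A^p + B^p).
-/

theorem intervalIntegral_symm_eq_integral_add_comp_neg {f : ℝ → ℝ} (hf : Continuous f) (r : ℝ) :
    ∫ t in -r..r, f t = ∫ s in 0..r, (f s + f (-s)) := by
  rw [intervalIntegral.integral_add (hf.intervalIntegrable _ _)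
      ((hf.comp' continuous_neg).intervalIntegrable _ _),
    intervalIntegral.integral_comp_neg, neg_zero, add_comm,
    intervalIntegral.integral_add_adjacent_intervals (hf.intervalIntegrable _ _)
      (hf.intervalIntegrable _ _)]

theorem le_intervalIntegral_two_mul_of_symm {f : ℝ → ℝ} {r c : ℝ} (hf : Continuous f)
    (hr : 0 ≤ r) (h : ∀ s ∈ Icc 0 r, c * (f s + f (-s)) ≤ 2 * (f (2 * s) + f (-(2 * s)))) :
    c * ∫ t in -r..r, f t ≤ ∫ t in -(2 * r)..2 * r, f t := by
  simp only [intervalIntegral_symm_eq_integral_add_comp_neg hf]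
  rw [← intervalIntegral.integral_const_mul]
  calc ∫ s in 0..r, c * (f s + f (-s))
      ≤ ∫ s in 0..r, 2 * (f (2 * s) + f (-(2 * s))) :=
        intervalIntegral.integral_mono_on hr (Continuous.intervalIntegrable (by fun_prop) _ _)
          (Continuous.intervalIntegrable (by fun_prop) _ _) h
    _ = ∫ s in 0..2 * r, (f s + f (-s)) := by
        rw [intervalIntegral.integral_const_mul, ← smul_eq_mul,
          intervalIntegral.smul_integral_comp_mul_left (fun s => f s + f (-s)) 2, mul_zero]

theorem ConvexOn.add_comp_neg_le_two_mul {f : ℝ → ℝ} (hf : ConvexOn ℝ univ f) (s : ℝ) :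
    f s + f (-s) ≤ f (2 * s) + f (-(2 * s)) := by
  have hconv (a b : ℝ) (ha : 0 ≤ a) (hb : 0 ≤ b) (hab : a + b = 1) :
      f (a * (2 * s) + b * (-(2 * s))) ≤ a * f (2 * s) + b * f (-(2 * s)) :=
    hf.2 (mem_univ _) (mem_univ _) ha hb hab
  have h₁ := hconv (3 / 4) (1 / 4) (by norm_num) (by norm_num) (by norm_num)
  have h₂ := hconv (1 / 4) (3 / 4) (by norm_num) (by norm_num) (by norm_num)
  rw [show 3 / 4 * (2 * s) + 1 / 4 * (-(2 * s)) = s by ring] at h₁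
  rw [show 1 / 4 * (2 * s) + 3 / 4 * (-(2 * s)) = -s by ring] at h₂
  linarith

theorem convexOn_max_add_zero (x : ℝ) : ConvexOn ℝ univ fun t : ℝ => max (x + t) 0 :=
  ((convexOn_const x convex_univ).add (convexOn_id convex_univ)).sup (convexOn_const 0 convex_univ)

theorem convexOn_max_add_zero_rpow (x : ℝ) {p : ℝ} (hp : 1 ≤ p) :
    ConvexOn ℝ univ fun t : ℝ => max (x + t) 0 ^ p := by
  have himage : (fun t : ℝ => max (x + t) 0) '' univ = Ici 0 := by
    ext y
    refine ⟨?_, fun hy => ⟨y - x, mem_univ _, by simpa using hy⟩⟩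
    rintro ⟨t, -, rfl⟩
    exact le_max_right (x + t) 0
  refine ConvexOn.comp (g := fun y : ℝ => y ^ p) ?_ (convexOn_max_add_zero x) ?_ <;> rw [himage]
  · exact convexOn_rpow hp
  · exact fun a ha b _ hab => Real.rpow_le_rpow ha hab (by linarith)

theorem two_rpow_mul_add_rpow_le {a b p : ℝ} (ha : 0 ≤ a) (hb : 0 ≤ b) (hp₀ : 0 ≤ p) (hp₁ : p ≤ 1) :
    2 ^ p * (a ^ p + b ^ p) ≤ 2 * (a + b) ^ p := by
  have h := (Real.concaveOn_rpow hp₀ hp₁).2 ha hb (by norm_num : (0 : ℝ) ≤ 1 / 2)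
    (by norm_num : (0 : ℝ) ≤ 1 / 2) (by norm_num)
  simp only [smul_eq_mul] at h
  rw [show 1 / 2 * a + 1 / 2 * b = (a + b) / 2 by ring,
    Real.div_rpow (by positivity) zero_le_two] at h
  have h2 : 0 < (2 : ℝ) ^ p := by positivity
  rw [le_div_iff₀ h2] at h
  linarith

theorem setIntegral_Ioo_inter_Ioi_rpow {p : ℝ} (hp : p ≠ 0) (x : ℝ) {ρ : ℝ} (hρ : 0 ≤ ρ) :
    ∫ y in Ioo (x - ρ) (x + ρ) ∩ Ioi 0, y ^ p = ∫ t in -ρ..ρ, max (x + t) 0 ^ p := by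
  have hind : (Ioi (0 : ℝ)).indicator (· ^ p) = fun y => max y 0 ^ p := by
    ext y
    rcases lt_or_ge 0 y with hy | hy
    · simp [hy, hy.le]
    · simp [hy.not_gt, hy, Real.zero_rpow hp]
  rw [← setIntegral_indicator measurableSet_Ioi, hind, ← integral_Ioc_eq_integral_Ioo,
    ← intervalIntegral.integral_of_le (by linarith),
    intervalIntegral.integral_comp_add_left (fun y => max y 0 ^ p), sub_eq_add_neg]

theorem min_two_two_rpow_mul_max_add_rpow_le {x p : ℝ} (hp : 0 < p) (s : ℝ) :
    min 2 (2 ^ p) * (max (x + s) 0 ^ p + max (x + -s) 0 ^ p) ≤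
      2 * (max (x + 2 * s) 0 ^ p + max (x + -(2 * s)) 0 ^ p) := by
  rcases le_total 1 p with hp1 | hp1
  · have h2 : (2 : ℝ) ≤ 2 ^ p := by
      simpa using Real.rpow_le_rpow_of_exponent_le one_le_two hp1
    have := (convexOn_max_add_zero_rpow x hp1).add_comp_neg_le_two_mul s
    rw [min_eq_left h2]
    linarith
  · have h2 : (2 : ℝ) ^ p ≤ 2 := by
      simpa using Real.rpow_le_rpow_of_exponent_le one_le_two hp1
    have hsum := (convexOn_max_add_zero x).add_comp_neg_le_two_mul s
    rw [min_eq_right h2]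
    calc 2 ^ p * (max (x + s) 0 ^ p + max (x + -s) 0 ^ p)
        ≤ 2 * (max (x + s) 0 + max (x + -s) 0) ^ p :=
          two_rpow_mul_add_rpow_le (le_max_right _ _) (le_max_right _ _) hp.le hp1
      _ ≤ 2 * (max (x + 2 * s) 0 + max (x + -(2 * s)) 0) ^ p := by gcongr
      _ ≤ 2 * (max (x + 2 * s) 0 ^ p + max (x + -(2 * s)) 0 ^ p) := by
          gcongr
          exact Real.rpow_add_le_add_rpow (le_max_right _ _) (le_max_right _ _) hp.le hp1

theorem doubling_lower_general (lam x r : ℝ) (hlam : 0 < lam) (hr : 0 < r) :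
    min 2 (2 ^ (2*lam)) * (∫ y in Ioo (x - r) (x + r) ∩ Ioi 0, y ^ (2*lam)) ≤
      ∫ y in Ioo (x - 2*r) (x + 2*r) ∩ Ioi 0, y ^ (2*lam) := by
  have hp : 0 < 2 * lam := by positivity
  rw [setIntegral_Ioo_inter_Ioi_rpow hp.ne' x hr.le,
    setIntegral_Ioo_inter_Ioi_rpow hp.ne' x (by positivity)]
  exact le_intervalIntegral_two_mul_of_symm
    ((by fun_prop : Continuous fun t => max (x + t) 0).rpow_const fun _ => .inr hp.le) hr.le
    fun s _ => min_two_two_rpow_mul_max_add_rpow_le hp s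

theorem doubling_lower (lam x r : ℝ) (hlam : 0 < lam) (hx : 0 < x) (hr : 0 < r) :
    min 2 (2 ^ (2*lam)) * (∫ y in Ioo (x - r) (x + r) ∩ Ioi 0, y ^ (2*lam)) ≤
      ∫ y in Ioo (x - 2*r) (x + 2*r) ∩ Ioi 0, y ^ (2*lam) :=
  doubling_lower_general lam x r hlam hr
end

section
/- For every λ ∈ (0, 1/2] and every t ∈ (0, 1/2], one has (1+2t)^{2λ+1} - (1-2t)^{2λ+1} ≥ 2^{2λ} [(1+t)^{2λ+1} - (1-t)^{2λ+1}]. -/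
/-!
Put `p = 2λ + 1 ∈ (1, 2]` and `u = 2t ∈ (0, 1]`. By homogeneity of `x ↦ x ^ p` the inequality
reads `(2 + u) ^ p - (2 - u) ^ p ≤ 2 ((1 + u) ^ p - (1 - u) ^ p)`. Both sides vanish at `u = 0`,
and comparing derivatives reduces it to
`(2 + u) ^ q + (2 - u) ^ q ≤ 2 ((1 + u) ^ q + (1 - u) ^ q)` for `q = p - 1 ∈ [0, 1]`.
By concavity of `x ↦ x ^ q` the left side is at most `2 · 2 ^ q`, and by its subadditivity
`2 ^ q = ((1 + u) + (1 - u)) ^ q ≤ (1 + u) ^ q + (1 - u) ^ q`.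
-/

open Set

namespace Real

lemma rpow_two_add_add_rpow_two_sub_le {q s : ℝ} (hq₀ : 0 ≤ q) (hq₁ : q ≤ 1)
    (hs₀ : -1 ≤ s) (hs₁ : s ≤ 1) :
    (2 + s) ^ q + (2 - s) ^ q ≤ 2 * ((1 + s) ^ q + (1 - s) ^ q) := by
  have hmid : (2 + s) ^ q + (2 - s) ^ q ≤ 2 * 2 ^ q := by
    have h := (concaveOn_rpow hq₀ hq₁).2 (show 0 ≤ 2 + s by linarith)
      (show 0 ≤ 2 - s by linarith) (by norm_num : (0 : ℝ) ≤ 1 / 2) (by norm_num : (0 : ℝ) ≤ 1 / 2)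
      (by norm_num)
    simp only [smul_eq_mul] at h
    rw [show 1 / 2 * (2 + s) + 1 / 2 * (2 - s) = 2 by ring] at h
    linarith
  have hsub : (2 : ℝ) ^ q ≤ (1 + s) ^ q + (1 - s) ^ q := by
    simpa [show (1 + s) + (1 - s) = 2 by ring] using
      rpow_add_le_add_rpow (show 0 ≤ 1 + s by linarith) (show 0 ≤ 1 - s by linarith) hq₀ hq₁
  linarith

lemma rpow_two_add_sub_rpow_two_sub_le {p u : ℝ} (hp₁ : 1 ≤ p) (hp₂ : p ≤ 2)
    (hu₀ : 0 ≤ u) (hu₁ : u ≤ 1) :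
    (2 + u) ^ p - (2 - u) ^ p ≤ 2 * ((1 + u) ^ p - (1 - u) ^ p) := by
  set H : ℝ → ℝ := fun x => 2 * ((1 + x) ^ p - (1 - x) ^ p) - ((2 + x) ^ p - (2 - x) ^ p)
  have hH : ∀ x, HasDerivAt H (p * (2 * ((1 + x) ^ (p - 1) + (1 - x) ^ (p - 1))
      - ((2 + x) ^ (p - 1) + (2 - x) ^ (p - 1)))) x := by
    intro x
    have hplus : ∀ c : ℝ, HasDerivAt (fun y => (c + y) ^ p) (p * (c + x) ^ (p - 1)) x := fun c => by
      simpa using ((hasDerivAt_id x).const_add c).rpow_const (Or.inr hp₁)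
    have hminus : ∀ c : ℝ, HasDerivAt (fun y => (c - y) ^ p) (-(p * (c - x) ^ (p - 1))) x :=
      fun c => by simpa using ((hasDerivAt_id x).const_sub c).rpow_const (Or.inr hp₁)
    exact ((((hplus 1).sub (hminus 1)).const_mul 2).sub ((hplus 2).sub (hminus 2))).congr_deriv
      (by ring)
  have hmono : MonotoneOn H (Icc 0 1) := by
    refine monotoneOn_of_deriv_nonneg (convex_Icc 0 1)
      (fun x _ => (hH x).continuousAt.continuousWithinAt)
      (fun x _ => (hH x).differentiableAt.differentiableWithinAt) fun x hx => ?_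
    rw [interior_Icc] at hx
    rw [(hH x).deriv]
    exact mul_nonneg (by linarith) (sub_nonneg.2 <|
      rpow_two_add_add_rpow_two_sub_le (by linarith) (by linarith) (by linarith [hx.1]) hx.2.le)
  have hle := hmono ⟨le_rfl, zero_le_one⟩ ⟨hu₀, hu₁⟩ hu₀
  simp only [H, add_zero, sub_zero, sub_self, mul_zero] at hle
  linarith

end Real

theorem ineq_case_i (lam t : ℝ) (hlam : 0 < lam) (hlam' : lam ≤ 1/2)
    (ht : 0 < t) (ht' : t ≤ 1/2) :
    2 ^ (2*lam) * ((1 + t) ^ (2*lam + 1) - (1 - t) ^ (2*lam + 1)) ≤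
      (1 + 2*t) ^ (2*lam + 1) - (1 - 2*t) ^ (2*lam + 1) := by
  have key := Real.rpow_two_add_sub_rpow_two_sub_le (p := 2*lam + 1) (u := 2*t)
    (by linarith) (by linarith) (by linarith) (by linarith)
  have hscale : ∀ x : ℝ, 0 ≤ x → (2 * x) ^ (2*lam + 1) = 2 * 2 ^ (2*lam) * x ^ (2*lam + 1) := by
    intro x hx
    rw [Real.mul_rpow zero_le_two hx, Real.rpow_add zero_lt_two, Real.rpow_one]
    ring
  rw [show 2 + 2*t = 2 * (1 + t) by ring, show 2 - 2*t = 2 * (1 - t) by ring,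
    hscale _ (by linarith), hscale _ (by linarith)] at key
  linarith
end

section
/- For every λ ∈ (1/2, ∞) and every t ∈ (0, 1/2], one has (1+2t)^{2λ+1} - (1-2t)^{2λ+1} ≥ 2 [(1+t)^{2λ+1} - (1-t)^{2λ+1}]. -/
/-!
Put `φ x = (1 + x) ^ p - (1 - x) ^ p` with `p = 2λ + 1 ≥ 2`. Its derivative
`p ((1 + x) ^ (p - 1) + (1 - x) ^ (p - 1))` is increasing on `[0, 1]`, because the derivative of
`(1 + x) ^ q + (1 - x) ^ q` is `q ((1 + x) ^ (q - 1) - (1 - x) ^ (q - 1)) ≥ 0` there for `q ≥ 1`.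
So `φ` is convex on `[0, 1]`, and as `φ 0 = 0`, convexity between `0` and `2t` gives
`φ t ≤ φ (2t) / 2`.
-/

open Set

section OneAddRpowOneSubRpow

variable {p : ℝ}

theorem hasDerivAt_one_add_rpow (hp : 1 ≤ p) (x : ℝ) :
    HasDerivAt (fun y : ℝ => (1 + y) ^ p) (p * (1 + x) ^ (p - 1)) x := by
  simpa using ((hasDerivAt_id x).const_add 1).rpow_const (Or.inr hp)

theorem hasDerivAt_one_sub_rpow (hp : 1 ≤ p) (x : ℝ) :
    HasDerivAt (fun y : ℝ => (1 - y) ^ p) (-(p * (1 - x) ^ (p - 1))) x := by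
  simpa using ((hasDerivAt_id x).const_sub 1).rpow_const (Or.inr hp)

theorem hasDerivAt_one_add_rpow_add_one_sub_rpow (hp : 1 ≤ p) (x : ℝ) :
    HasDerivAt (fun y : ℝ => (1 + y) ^ p + (1 - y) ^ p)
      (p * ((1 + x) ^ (p - 1) - (1 - x) ^ (p - 1))) x :=
  ((hasDerivAt_one_add_rpow hp x).add (hasDerivAt_one_sub_rpow hp x)).congr_deriv (by ring)

theorem hasDerivAt_one_add_rpow_sub_one_sub_rpow (hp : 1 ≤ p) (x : ℝ) :
    HasDerivAt (fun y : ℝ => (1 + y) ^ p - (1 - y) ^ p)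
      (p * ((1 + x) ^ (p - 1) + (1 - x) ^ (p - 1))) x :=
  ((hasDerivAt_one_add_rpow hp x).sub (hasDerivAt_one_sub_rpow hp x)).congr_deriv (by ring)

theorem monotoneOn_one_add_rpow_add_one_sub_rpow (hp : 1 ≤ p) :
    MonotoneOn (fun x : ℝ => (1 + x) ^ p + (1 - x) ^ p) (Icc 0 1) := by
  have hderiv := hasDerivAt_one_add_rpow_add_one_sub_rpow hp
  refine monotoneOn_of_deriv_nonneg (convex_Icc 0 1)
    (fun x _ => (hderiv x).continuousAt.continuousWithinAt)
    (fun x _ => (hderiv x).differentiableAt.differentiableWithinAt) fun x hx => ?_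
  rw [interior_Icc] at hx
  rw [(hderiv x).deriv]
  have hle : (1 - x) ^ (p - 1) ≤ (1 + x) ^ (p - 1) :=
    Real.rpow_le_rpow (by linarith [hx.2]) (by linarith [hx.1]) (by linarith)
  exact mul_nonneg (by linarith) (sub_nonneg.mpr hle)

theorem convexOn_one_add_rpow_sub_one_sub_rpow (hp : 2 ≤ p) :
    ConvexOn ℝ (Icc 0 1) (fun x : ℝ => (1 + x) ^ p - (1 - x) ^ p) := by
  have hderiv := hasDerivAt_one_add_rpow_sub_one_sub_rpow (p := p) (by linarith)
  refine MonotoneOn.convexOn_of_deriv (convex_Icc 0 1)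
    (fun x _ => (hderiv x).continuousAt.continuousWithinAt)
    (fun x _ => (hderiv x).differentiableAt.differentiableWithinAt) ?_
  rw [interior_Icc]
  intro x hx y hy hxy
  rw [(hderiv x).deriv, (hderiv y).deriv]
  have hmono := monotoneOn_one_add_rpow_add_one_sub_rpow (p := p - 1) (by linarith)
    (Ioo_subset_Icc_self hx) (Ioo_subset_Icc_self hy) hxy
  exact mul_le_mul_of_nonneg_left hmono (by linarith)

end OneAddRpowOneSubRpow

theorem ConvexOn.two_mul_le_of_map_zero {f : ℝ → ℝ} {s : Set ℝ} (hf : ConvexOn ℝ s f)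
    (h0 : f 0 = 0) {t : ℝ} (h0s : 0 ∈ s) (hts : 2 * t ∈ s) : 2 * f t ≤ f (2 * t) := by
  have hmid := hf.2 h0s hts (by norm_num : (0 : ℝ) ≤ 1 / 2) (by norm_num : (0 : ℝ) ≤ 1 / 2)
    (by norm_num)
  rw [smul_eq_mul, smul_eq_mul, smul_eq_mul, smul_eq_mul, h0,
    show (1 / 2 : ℝ) * 0 + 1 / 2 * (2 * t) = t by ring] at hmid
  linarith

theorem ineq_case_ii (lam t : ℝ) (hlam : 1/2 < lam)
    (ht : 0 < t) (ht' : t ≤ 1/2) :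
    2 * ((1 + t) ^ (2*lam + 1) - (1 - t) ^ (2*lam + 1)) ≤
      (1 + 2*t) ^ (2*lam + 1) - (1 - 2*t) ^ (2*lam + 1) := by
  have hconv := convexOn_one_add_rpow_sub_one_sub_rpow (p := 2 * lam + 1) (by linarith)
  exact hconv.two_mul_le_of_map_zero (by simp) (left_mem_Icc.mpr zero_le_one)
    ⟨by linarith, by linarith⟩
end

section
/- For every λ > 0 and every t ∈ (1/2, 1), one has (1+2t)^{2λ+1} ≥ min(2, 2^{2λ}) [(1+t)^{2λ+1} - (1-t)^{2λ+1}]. -/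
/-!
Put `p = 2λ + 1`. For `p ≤ 2`, subadditivity of `x ↦ x ^ (p/2)` applied to
`(1 + t)² = (1 - t)² + 4t` gives `(1 + t)^p - (1 - t)^p ≤ (4t)^(p/2)`, and
`2^(p-1) (4t)^(p/2) ≤ (8t)^(p/2) ≤ (1 + 2t)^p`.
For `p ≥ 2`, `g s = (1 + 2s)^p - 2(1 + s)^p + 2(1 - s)^p` is increasing on `[1/2, 1]`
because `(1 + s)^(p-1) + (1 - s)^(p-1) ≤ (1 + s)^(p-1) + s^(p-1) ≤ (1 + 2s)^(p-1)`,
and `2^p g(1/2) = 4^p - 2·3^p + 2 ≥ 0`: with `u = p - 2`, `3 ≤ 4^(8/9)` and Bernoulli give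
`9·3^u ≤ 9 (4^u)^(8/9) ≤ 8·4^u + 1`.
-/

open Real Set

lemma sq_rpow_div_two {x : ℝ} (hx : 0 ≤ x) (p : ℝ) : (x ^ 2) ^ (p / 2) = x ^ p := by
  rw [← rpow_natCast_mul hx, Nat.cast_ofNat, mul_div_cancel₀ _ two_ne_zero]

section ExponentAtMostTwo

variable {p t : ℝ}

lemma one_add_rpow_sub_one_sub_rpow_le (hp0 : 0 ≤ p) (hp2 : p ≤ 2) (ht0 : 0 ≤ t)
    (ht1 : t ≤ 1) : (1 + t) ^ p - (1 - t) ^ p ≤ (4 * t) ^ (p / 2) := by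
  have h := rpow_add_le_add_rpow (sq_nonneg (1 - t)) (by positivity : 0 ≤ 4 * t)
    (by linarith : 0 ≤ p / 2) (by linarith : p / 2 ≤ 1)
  rw [show (1 - t) ^ 2 + 4 * t = (1 + t) ^ 2 by ring, sq_rpow_div_two (by linarith),
    sq_rpow_div_two (by linarith)] at h
  linarith

lemma two_rpow_sub_one_mul_rpow_le (hp0 : 0 ≤ p) (hp2 : p ≤ 2) (ht : 0 ≤ t) :
    2 ^ (p - 1) * (4 * t) ^ (p / 2) ≤ (1 + 2 * t) ^ p :=
  calc 2 ^ (p - 1) * (4 * t) ^ (p / 2) ≤ 2 ^ (p / 2) * (4 * t) ^ (p / 2) := by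
        gcongr
        · norm_num
        · linarith
    _ = (8 * t) ^ (p / 2) := by rw [← mul_rpow (by norm_num) (by positivity)]; ring_nf
    _ ≤ ((1 + 2 * t) ^ 2) ^ (p / 2) := by
        gcongr
        nlinarith [sq_nonneg (2 * t - 1)]
    _ = (1 + 2 * t) ^ p := sq_rpow_div_two (by linarith) p

theorem two_rpow_sub_one_mul_sub_le_of_le_two (hp0 : 0 ≤ p) (hp2 : p ≤ 2) (ht0 : 0 ≤ t)
    (ht1 : t ≤ 1) : 2 ^ (p - 1) * ((1 + t) ^ p - (1 - t) ^ p) ≤ (1 + 2 * t) ^ p :=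
  (mul_le_mul_of_nonneg_left (one_add_rpow_sub_one_sub_rpow_le hp0 hp2 ht0 ht1)
    (by positivity)).trans (two_rpow_sub_one_mul_rpow_le hp0 hp2 ht0)

end ExponentAtMostTwo

section ExponentAtLeastTwo

variable {p : ℝ}

lemma nine_mul_three_rpow_le {u : ℝ} (hu : 0 ≤ u) : 9 * (3 : ℝ) ^ u ≤ 8 * 4 ^ u + 1 := by
  have h34 : (3 : ℝ) ≤ 4 ^ (8 / 9 : ℝ) := by
    refine le_of_pow_le_pow_left₀ (n := 9) (by norm_num) (by positivity) ?_
    rw [← rpow_mul_natCast (by norm_num)]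
    norm_num
  have h4u : 1 ≤ (4 : ℝ) ^ u := one_le_rpow (by norm_num) hu
  have bernoulli := rpow_one_add_le_one_add_mul_self (s := 4 ^ u - 1) (by linarith)
    (p := 8 / 9) (by norm_num) (by norm_num)
  rw [add_sub_cancel] at bernoulli
  calc 9 * (3 : ℝ) ^ u ≤ 9 * ((4 : ℝ) ^ (8 / 9 : ℝ)) ^ u := by gcongr
    _ = 9 * ((4 : ℝ) ^ u) ^ (8 / 9 : ℝ) := by
        rw [← rpow_mul (by norm_num), ← rpow_mul (by norm_num), mul_comm u]
    _ ≤ 8 * 4 ^ u + 1 := by linarith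

lemma two_mul_three_rpow_le (hp : 2 ≤ p) : 2 * (3 : ℝ) ^ p ≤ 4 ^ p + 2 := by
  have h := nine_mul_three_rpow_le (sub_nonneg.2 hp)
  rw [rpow_sub (by norm_num), rpow_sub (by norm_num)] at h
  norm_num at h
  linarith

lemma two_mul_three_halves_rpow_le (hp : 2 ≤ p) :
    2 * (3 / 2 : ℝ) ^ p ≤ 2 ^ p + 2 * (1 / 2) ^ p := by
  have h := two_mul_three_rpow_le hp
  rw [show (4 : ℝ) = 2 * 2 by norm_num, mul_rpow (by norm_num) (by norm_num)] at h
  have h2 : (0 : ℝ) < 2 ^ p := by positivity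
  rw [div_rpow (by norm_num) (by norm_num), div_rpow (by norm_num) (by norm_num), one_rpow]
  field_simp
  linarith

lemma one_add_rpow_add_one_sub_rpow_le {q s : ℝ} (hq : 1 ≤ q) (hs : 1 / 2 ≤ s) (hs1 : s ≤ 1) :
    (1 + s) ^ q + (1 - s) ^ q ≤ (1 + 2 * s) ^ q :=
  calc (1 + s) ^ q + (1 - s) ^ q ≤ (1 + s) ^ q + s ^ q := by
        gcongr
        linarith
    _ ≤ (1 + s + s) ^ q := add_rpow_le_rpow_add (by linarith) (by linarith) hq
    _ = (1 + 2 * s) ^ q := by ring_nf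

lemma monotoneOn_rpow_sub_two_mul_rpow_add_two_mul_rpow (hp : 2 ≤ p) :
    MonotoneOn (fun s : ℝ => (1 + 2 * s) ^ p - 2 * (1 + s) ^ p + 2 * (1 - s) ^ p)
      (Icc (1 / 2) 1) := by
  have hp1 : 1 ≤ p := by linarith
  have hderiv (s : ℝ) : HasDerivAt
      (fun s : ℝ => (1 + 2 * s) ^ p - 2 * (1 + s) ^ p + 2 * (1 - s) ^ p)
      (2 * p * ((1 + 2 * s) ^ (p - 1) - (1 + s) ^ (p - 1) - (1 - s) ^ (p - 1))) s := by
    have h1 := (((hasDerivAt_id s).const_mul 2).const_add 1).rpow_const (p := p) (Or.inr hp1)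
    have h2 := ((hasDerivAt_id s).const_add 1).rpow_const (p := p) (Or.inr hp1)
    have h3 := ((hasDerivAt_id s).const_sub 1).rpow_const (p := p) (Or.inr hp1)
    exact ((h1.sub (h2.const_mul 2)).add (h3.const_mul 2)).congr_deriv
      (by simp only [id]; ring)
  refine monotoneOn_of_hasDerivWithinAt_nonneg (convex_Icc _ _)
    (fun s _ => (hderiv s).continuousAt.continuousWithinAt)
    (fun s _ => (hderiv s).hasDerivWithinAt) fun s hs => ?_
  rw [interior_Icc] at hs
  have := one_add_rpow_add_one_sub_rpow_le (by linarith : 1 ≤ p - 1) hs.1.le hs.2.le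
  exact mul_nonneg (by linarith) (by linarith)

theorem two_mul_sub_le_of_two_le {t : ℝ} (hp : 2 ≤ p) (ht : 1 / 2 ≤ t) (ht1 : t ≤ 1) :
    2 * ((1 + t) ^ p - (1 - t) ^ p) ≤ (1 + 2 * t) ^ p := by
  have hmono := monotoneOn_rpow_sub_two_mul_rpow_add_two_mul_rpow hp
    ⟨le_rfl, by norm_num⟩ ⟨ht, ht1⟩ ht
  have hhalf := two_mul_three_halves_rpow_le hp
  norm_num at hmono hhalf ⊢
  linarith

end ExponentAtLeastTwo

theorem ineq_case_iii_iv (lam t : ℝ) (hlam : 0 < lam)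
    (ht : 1/2 < t) (ht' : t < 1) :
    min 2 (2 ^ (2*lam)) * ((1 + t) ^ (2*lam + 1) - (1 - t) ^ (2*lam + 1)) ≤
      (1 + 2*t) ^ (2*lam + 1) := by
  rcases le_total (2 * lam) 1 with h | h
  · rw [min_eq_right (by simpa using rpow_le_rpow_of_exponent_le one_le_two h)]
    simpa using two_rpow_sub_one_mul_sub_le_of_le_two (p := 2 * lam + 1) (by linarith)
      (by linarith) (by linarith) ht'.le
  · rw [min_eq_left (by simpa using rpow_le_rpow_of_exponent_le one_le_two h)]
    exact two_mul_sub_le_of_two_le (by linarith) ht.le ht'.le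
end

section
/- For every λ > 0 and every t ∈ (0, 1/2], one has (1+2t)^{2λ+1} - (1-2t)^{2λ+1} ≤ 2^{2λ+1} [(1+t)^{2λ+1} - (1-t)^{2λ+1}]. -/
/-! With `p = 2λ + 1 ≥ 1`, the points `1 + 2t` and `2 - 2t` lie between `1 - 2t ≥ 0` and
`2 + 2t` and have the same sum as these endpoints, so convexity of `x ↦ x ^ p` gives
`(1 + 2t) ^ p + (2 - 2t) ^ p ≤ (1 - 2t) ^ p + (2 + 2t) ^ p`; pulling `2 ^ p` out of
`(2 ± 2t) ^ p` turns this into the claim. -/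

open Real

/-- The two-point case of Karamata's inequality. -/
theorem ConvexOn.map_add_map_le_of_add_eq {𝕜 β : Type*} [Field 𝕜] [LinearOrder 𝕜]
    [IsStrictOrderedRing 𝕜] [AddCommGroup β] [PartialOrder β] [IsOrderedAddMonoid β]
    [Module 𝕜 β] {s : Set 𝕜} {f : 𝕜 → β} (hf : ConvexOn 𝕜 s f) {a b x y : 𝕜}
    (ha : a ∈ s) (hb : b ∈ s) (hax : a ≤ x) (hxb : x ≤ b) (hsum : x + y = a + b) :
    f x + f y ≤ f a + f b := by
  rcases hax.eq_or_lt with rfl | hax'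
  · obtain rfl : y = b := by linarith
    exact le_rfl
  have hab : 0 < b - a := by linarith
  set θ := (b - x) / (b - a) with hθ
  have hθ₀ : 0 ≤ θ := div_nonneg (by linarith) hab.le
  have hθ₁ : 0 ≤ 1 - θ := by rw [hθ, one_sub_div hab.ne']; exact div_nonneg (by linarith) hab.le
  have hx : θ • a + (1 - θ) • b = x := by
    simp only [smul_eq_mul, hθ]; field_simp; ring
  have hy : (1 - θ) • a + θ • b = y := by
    simp only [smul_eq_mul, hθ]; field_simp; linear_combination (a - b) * hsum
  have hfx := hf.2 ha hb hθ₀ hθ₁ (add_sub_cancel θ 1)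
  have hfy := hf.2 ha hb hθ₁ hθ₀ (sub_add_cancel 1 θ)
  rw [hx] at hfx
  rw [hy] at hfy
  calc f x + f y ≤ θ • f a + (1 - θ) • f b + ((1 - θ) • f a + θ • f b) := add_le_add hfx hfy
    _ = f a + f b := by module

theorem tilde_ineq_small_t (lam t : ℝ) (hlam : 0 < lam)
    (ht : 0 < t) (ht' : t ≤ 1/2) :
    (1 + 2*t) ^ (2*lam + 1) - (1 - 2*t) ^ (2*lam + 1) ≤
      2 ^ (2*lam + 1) * ((1 + t) ^ (2*lam + 1) - (1 - t) ^ (2*lam + 1)) := by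
  set p := 2*lam + 1
  have key : (1 + 2*t) ^ p + (2 * (1 - t)) ^ p ≤ (1 - 2*t) ^ p + (2 * (1 + t)) ^ p :=
    (convexOn_rpow (by linarith : 1 ≤ p)).map_add_map_le_of_add_eq
      (Set.mem_Ici.2 (by linarith)) (Set.mem_Ici.2 (by linarith)) (by linarith) (by linarith)
      (by ring)
  rw [mul_rpow zero_le_two (by linarith), mul_rpow zero_le_two (by linarith)] at key
  linarith
end

section
/- For every λ > 0 and every t ∈ [1/2, 1), one has (1+2t)^{2λ+1} ≤ 2^{2λ+1} [(1+t)^{2λ+1} - (1-t)^{2λ+1}]. -/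
/-! Since `p = 2λ + 1 ≥ 1`, the map `x ↦ x ^ p` is superadditive on `[0, ∞)`. Applied to
`(1 + 2t) + 2(1 - t) = 3 ≤ 2(1 + t)`, which is where `t ≥ 1/2` enters, it gives
`(1 + 2t)^p + 2^p (1 - t)^p ≤ 2^p (1 + t)^p`. -/

theorem Real.rpow_add_rpow_le_of_add_le {a b c p : ℝ} (ha : 0 ≤ a) (hb : 0 ≤ b) (hp : 1 ≤ p)
    (habc : a + b ≤ c) : a ^ p + b ^ p ≤ c ^ p :=
  (Real.add_rpow_le_rpow_add ha hb hp).trans <|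
    Real.rpow_le_rpow (add_nonneg ha hb) habc (by linarith)

theorem tilde_ineq_large_t (lam t : ℝ) (hlam : 0 < lam)
    (ht : 1/2 ≤ t) (ht' : t < 1) :
    (1 + 2*t) ^ (2*lam + 1) ≤
      2 ^ (2*lam + 1) * ((1 + t) ^ (2*lam + 1) - (1 - t) ^ (2*lam + 1)) := by
  have hp : 1 ≤ 2*lam + 1 := by linarith
  have hsuper : (1 + 2*t) ^ (2*lam + 1) + (2 * (1 - t)) ^ (2*lam + 1) ≤
      (2 * (1 + t)) ^ (2*lam + 1) :=
    Real.rpow_add_rpow_le_of_add_le (by linarith) (by linarith) hp (by linarith)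
  rw [Real.mul_rpow zero_le_two (by linarith), Real.mul_rpow zero_le_two (by linarith)] at hsuper
  linarith
end

section
/- Fix α ∈ (0, 1]. The function g_α(t) := 2^{-α} - [((1+t)/(1+2t))^{α+1} - ((1-t)/(1+2t))^{α+1}] is nonnegative for all t ∈ (1/2, 1). In particular, g_1(t) = (1-2t)^2 / (2(1+2t)^2) ≥ 0. -/
/-!
Write `a = (1 + t) / (1 + 2t)` and `b = (1 - t) / (1 + 2t)`. Then `a² - b² = 4t / (1 + 2t)²`
falls short of `1/2` by exactly `(1 - 2t)² / (2(1 + 2t)²)`, which is the formula for `g₁`.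
For general `α`, subadditivity of `x ↦ x ^ ((α + 1) / 2)` applied to `a²` and `b²` gives
`a^(α+1) - b^(α+1) ≤ (a² - b²)^((α+1)/2) ≤ 2^(-(α+1)/2) ≤ 2^(-α)`, the last step because `α ≤ 1`.
-/

open Real

lemma rpow_sub_rpow_le_rpow_sub {x y p : ℝ} (hy : 0 ≤ y) (hyx : y ≤ x) (hp : 0 ≤ p)
    (hp1 : p ≤ 1) : x ^ p - y ^ p ≤ (x - y) ^ p := by
  have h := rpow_add_le_add_rpow (sub_nonneg.2 hyx) hy hp hp1
  rw [sub_add_cancel] at h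
  linarith

lemma rpow_eq_sq_rpow_half {x : ℝ} (hx : 0 ≤ x) (p : ℝ) : x ^ p = (x ^ 2) ^ (p / 2) := by
  rw [← rpow_two, ← rpow_mul hx]
  ring_nf

lemma rpow_sub_rpow_le_sq_sub_sq_rpow_half {x y p : ℝ} (hy : 0 ≤ y) (hyx : y ≤ x) (hp : 0 ≤ p)
    (hp2 : p ≤ 2) : x ^ p - y ^ p ≤ (x ^ 2 - y ^ 2) ^ (p / 2) := by
  rw [rpow_eq_sq_rpow_half (hy.trans hyx), rpow_eq_sq_rpow_half hy]
  exact rpow_sub_rpow_le_rpow_sub (sq_nonneg y) (pow_le_pow_left₀ hy hyx 2) (by linarith)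
    (by linarith)

lemma half_rpow_le_two_rpow_neg {p q : ℝ} (hpq : p ≤ q) : (1 / 2 : ℝ) ^ q ≤ 2 ^ (-p) := by
  rw [rpow_neg zero_le_two, ← inv_rpow zero_le_two, ← one_div]
  exact rpow_le_rpow_of_exponent_ge (by norm_num) (by norm_num) hpq

lemma div_sq_sub_div_sq_eq (t : ℝ) (ht : 1 + 2 * t ≠ 0) :
    ((1 + t) / (1 + 2 * t)) ^ 2 - ((1 - t) / (1 + 2 * t)) ^ 2
      = 1 / 2 - (1 - 2 * t) ^ 2 / (2 * (1 + 2 * t) ^ 2) := by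
  rw [div_pow, div_pow, div_sub_div_same, eq_sub_iff_add_eq, div_add_div _ _ (by positivity)
    (by positivity), div_eq_div_iff (by positivity) two_ne_zero]
  ring

theorem g_alpha_nonneg (α t : ℝ) (hα : 0 < α) (hα' : α ≤ 1)
    (ht : 1/2 < t) (ht' : t < 1) :
    0 ≤ 2 ^ (-α) - (((1 + t) / (1 + 2*t)) ^ (α + 1) - ((1 - t) / (1 + 2*t)) ^ (α + 1)) ∧
      2 ^ (-(1:ℝ)) - (((1 + t) / (1 + 2*t)) ^ ((1:ℝ) + 1) - ((1 - t) / (1 + 2*t)) ^ ((1:ℝ) + 1))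
        = (1 - 2*t) ^ 2 / (2 * (1 + 2*t) ^ 2) := by
  have hd : 0 < 1 + 2 * t := by linarith
  have hsq := div_sq_sub_div_sq_eq t hd.ne'
  set a := (1 + t) / (1 + 2 * t)
  set b := (1 - t) / (1 + 2 * t)
  refine ⟨sub_nonneg.2 ?_, ?_⟩
  · have hb : 0 ≤ b := div_nonneg (by linarith) hd.le
    have hba : b ≤ a := div_le_div_of_nonneg_right (by linarith) hd.le
    have hsq_le : a ^ 2 - b ^ 2 ≤ 1 / 2 := by
      rw [hsq]
      linarith [show 0 ≤ (1 - 2 * t) ^ 2 / (2 * (1 + 2 * t) ^ 2) by positivity]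
    calc a ^ (α + 1) - b ^ (α + 1) ≤ (a ^ 2 - b ^ 2) ^ ((α + 1) / 2) :=
          rpow_sub_rpow_le_sq_sub_sq_rpow_half hb hba (by linarith) (by linarith)
      _ ≤ (1 / 2) ^ ((α + 1) / 2) :=
          rpow_le_rpow (sub_nonneg.2 (pow_le_pow_left₀ hb hba 2)) hsq_le (by linarith)
      _ ≤ 2 ^ (-α) := half_rpow_le_two_rpow_neg (by linarith)
  · rw [one_add_one_eq_two, rpow_two, rpow_two, rpow_neg_one, hsq]
    ring
end

section
/- The function h(λ) := 2^{2λ+1} - 2[(3/2)^{2λ+1} - (1/2)^{2λ+1}] satisfies h(λ) ≤ 0 for all λ ∈ [0, 1/2] and h(λ) ≥ 0 for all λ ∈ [1/2, ∞), with h(0) = h(1/2) = 0. -/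
/-!
Put `t = 2λ + 1`. Factoring out `(3/2)^t` gives `h(λ) = (3/2)^t (g t - 2)` with
`g t = (4/3)^t + 2 (1/3)^t`, a sum of exponentials and hence convex. Since `g 1 = g 2 = 2`,
convexity forces `g ≤ 2` on `[1, 2]` and `g ≥ 2` on `[2, ∞)`.
-/

open Real Set

lemma two_rpow_sub_eq_three_halves_rpow_mul (t : ℝ) :
    (2 : ℝ) ^ t - 2 * ((3/2 : ℝ) ^ t - (1/2 : ℝ) ^ t) =
      (3/2 : ℝ) ^ t * ((4/3 : ℝ) ^ t + 2 * (1/3 : ℝ) ^ t - 2) := by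
  have h2 : (2 : ℝ) ^ t = (3/2 : ℝ) ^ t * (4/3 : ℝ) ^ t := by
    rw [← mul_rpow (by norm_num) (by norm_num)]; norm_num
  have h12 : (1/2 : ℝ) ^ t = (3/2 : ℝ) ^ t * (1/3 : ℝ) ^ t := by
    rw [← mul_rpow (by norm_num) (by norm_num)]; norm_num
  rw [h2, h12]
  ring

lemma convexOn_four_thirds_rpow_add_two_mul_one_third_rpow :
    ConvexOn ℝ univ (fun t : ℝ => (4/3 : ℝ) ^ t + 2 * (1/3 : ℝ) ^ t) :=
  (convexOn_rpow_left (by norm_num)).add ((convexOn_rpow_left (by norm_num)).smul (by norm_num))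

theorem h_sign (lam : ℝ) :
    (0 ≤ lam → lam ≤ 1/2 →
      2 ^ (2*lam + 1) - 2 * ((3/2 : ℝ) ^ (2*lam + 1) - (1/2 : ℝ) ^ (2*lam + 1)) ≤ 0) ∧
    (1/2 ≤ lam →
      0 ≤ 2 ^ (2*lam + 1) - 2 * ((3/2 : ℝ) ^ (2*lam + 1) - (1/2 : ℝ) ^ (2*lam + 1))) ∧
    (2 : ℝ) ^ (2*(0:ℝ) + 1) - 2 * ((3/2 : ℝ) ^ (2*(0:ℝ) + 1) - (1/2 : ℝ) ^ (2*(0:ℝ) + 1)) = 0 ∧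
    (2 : ℝ) ^ (2*(1/2:ℝ) + 1) - 2 * ((3/2 : ℝ) ^ (2*(1/2:ℝ) + 1) - (1/2 : ℝ) ^ (2*(1/2:ℝ) + 1)) = 0 := by
  set g : ℝ → ℝ := fun t => (4/3 : ℝ) ^ t + 2 * (1/3 : ℝ) ^ t with hg_def
  have hg := convexOn_four_thirds_rpow_add_two_mul_one_third_rpow
  have g_one : g 1 = 2 := by norm_num [hg_def]
  have g_two : g 2 = 2 := by norm_num [hg_def]
  simp only [two_rpow_sub_eq_three_halves_rpow_mul]
  refine ⟨fun h0 h12 => ?_, fun h12 => ?_, by norm_num, by norm_num⟩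
  · have hle : g (2*lam + 1) ≤ max (g 1) (g 2) :=
      hg.le_on_segment (mem_univ _) (mem_univ _) (Icc_subset_segment ⟨by linarith, by linarith⟩)
    rw [g_one, g_two, max_self] at hle
    exact mul_nonpos_of_nonneg_of_nonpos (by positivity) (sub_nonpos.2 hle)
  · have hge : g 2 ≤ g (2*lam + 1) :=
      hg.le_right_of_left_le'' (mem_univ 1) (mem_univ _) one_lt_two (by linarith)
        (g_one.trans g_two.symm).le
    rw [g_two] at hge
    exact mul_nonneg (by positivity) (sub_nonneg.2 hge)
end

section
/- For λ > 0, the measure m_λ(E) = ∫_E y^{2λ} dy on (0,∞) is not uniformly 2-doubling for the factor min: there exist intervals I ⊂ (0,∞) with m_λ(2I) < 2 m_λ(I). Concretely, for λ ∈ (0, 1/2] and any x > 0, m_λ(I(x, x)) ≤ 2 m_λ(I(x, x/2)). -/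
/-!
With `q = 2λ + 1`, both measures are explicit: `m_λ(I(x,x)) = (2x)^q / q` and
`m_λ(I(x,x/2)) = ((3x/2)^q - (x/2)^q) / q`. After dividing by `(x/2)^q` the claim becomes
`4^q ≤ 2·3^q - 2` for `q ∈ [1, 2]`, with equality at both ends. Bernoulli's inequality for
exponents in `[0, 1]` bounds `(4/3)^(q-1)` and `3^(2-q)` by their chords, and these two chord
bounds combine to exactly this inequality.
-/

open MeasureTheory Set

lemma four_rpow_le_two_mul_three_rpow_sub_two {q : ℝ} (hq₁ : 1 ≤ q) (hq₂ : q ≤ 2) :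
    (4 : ℝ) ^ q ≤ 2 * 3 ^ q - 2 := by
  have bernoulli_four_thirds : (4 / 3 : ℝ) ^ (q - 1) ≤ 1 + (q - 1) * (1 / 3) := by
    convert rpow_one_add_le_one_add_mul_self (s := 1 / 3) (by norm_num) (p := q - 1)
      (by linarith) (by linarith) using 2
    norm_num
  have bernoulli_three : (3 : ℝ) ^ (2 - q) ≤ 1 + (2 - q) * 2 := by
    convert rpow_one_add_le_one_add_mul_self (s := 2) (by norm_num) (p := 2 - q)
      (by linarith) (by linarith) using 2
    norm_num
  have four_rpow : (4 : ℝ) ^ q = 4 / 3 * 3 ^ q * (4 / 3) ^ (q - 1) := by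
    rw [Real.rpow_sub (by norm_num), Real.rpow_one, Real.div_rpow (by norm_num) (by norm_num)]
    field_simp
  have three_rpow : (3 : ℝ) ^ q * 3 ^ (2 - q) = 9 := by
    rw [← Real.rpow_add (by norm_num)]
    norm_num
  have h3q : (0 : ℝ) < 3 ^ q := by positivity
  rw [four_rpow]
  linarith [mul_le_mul_of_nonneg_left bernoulli_four_thirds h3q.le,
    mul_le_mul_of_nonneg_left bernoulli_three h3q.le]

lemma rpow_two_mul_le_two_mul_sub {q x : ℝ} (hq₁ : 1 ≤ q) (hq₂ : q ≤ 2) (hx : 0 ≤ x) :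
    (2 * x) ^ q ≤ 2 * ((3 * x / 2) ^ q - (x / 2) ^ q) := by
  have scale (c : ℝ) (hc : 0 ≤ c) : (c * x / 2) ^ q = c ^ q * (x / 2) ^ q := by
    rw [mul_div_assoc, Real.mul_rpow hc (by positivity)]
  have key := mul_le_mul_of_nonneg_right (four_rpow_le_two_mul_three_rpow_sub_two hq₁ hq₂)
    (by positivity : (0 : ℝ) ≤ (x / 2) ^ q)
  rw [show 2 * x = 4 * x / 2 by ring, scale 4 (by norm_num), scale 3 (by norm_num)]
  linarith

lemma setIntegral_Ioo_rpow {r a b : ℝ} (hr : -1 < r) (hab : a ≤ b) :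
    ∫ y in Ioo a b, y ^ r = (b ^ (r + 1) - a ^ (r + 1)) / (r + 1) := by
  rw [← integral_Ioc_eq_integral_Ioo, ← intervalIntegral.integral_of_le hab]
  exact integral_rpow (Or.inl hr)

lemma Ioo_inter_Ioi_of_nonneg {a b : ℝ} (ha : 0 ≤ a) : Ioo a b ∩ Ioi 0 = Ioo a b :=
  inter_eq_left.mpr (Ioo_subset_Ioi_self.trans (Ioi_subset_Ioi ha))

theorem reverse_doubling_sharp (lam x : ℝ) (hlam : 0 < lam) (hlam' : lam ≤ 1/2)
    (hx : 0 < x) :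
    (∫ y in Ioo (x - x) (x + x) ∩ Ioi 0, y ^ (2*lam)) ≤
      2 * ∫ y in Ioo (x - x/2) (x + x/2) ∩ Ioi 0, y ^ (2*lam) := by
  have hr : -1 < 2 * lam := by linarith
  rw [sub_self, show x + x = 2 * x by ring, show x - x / 2 = x / 2 by ring,
    show x + x / 2 = 3 * x / 2 by ring, Ioo_inter_Ioi_of_nonneg le_rfl,
    Ioo_inter_Ioi_of_nonneg (by positivity), setIntegral_Ioo_rpow hr (by positivity),
    setIntegral_Ioo_rpow hr (by linarith), Real.zero_rpow (by linarith), sub_zero,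
    mul_div_assoc']
  gcongr
  exact rpow_two_mul_le_two_mul_sub (by linarith) (by linarith) hx.le
end

section
/- For λ > 0, with x = N+1, y = N, r = 1, the symmetric difference measure m_λ(I(N+1,1) \ I(N,1)) = ∫_{N+1}^{N+2} t^{2λ} dt ≥ (N+1)^{2λ}, which tends to infinity as N → ∞. Consequently there is no constant C and ε₀ ∈ (0,1) such that m_λ(I(x,r) \ I(y,r)) + m_λ(I(y,r) \ I(x,r)) ≤ C (|x-y|/r)^{ε₀} for all x, y ∈ (0,∞) and |x-y| ≤ r ≤ 1. -/
/-! On the unit interval `(N+1, N+2)`, which lies in `I(N+1, 1)` but not in `I(N, 1)`, the weight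
`t ^ (2λ)` is at least `(N+1) ^ (2λ)`. So with `|x - y| = r = 1` the symmetric difference has
`m_λ`-measure at least `(N+1) ^ (2λ) → ∞`, while a Hölder bound `C (|x-y|/r) ^ ε₀` would cap it by `C`. -/

open MeasureTheory Set Filter

theorem mul_rpow_le_setIntegral_Ioo {p a b : ℝ} (hp : 0 ≤ p) (ha : 0 ≤ a) (hab : a ≤ b) :
    (b - a) * a ^ p ≤ ∫ t in Ioo a b, t ^ p := by
  have hle : ∀ t ∈ Ioo a b, a ^ p ≤ t ^ p := fun t ht =>
    Real.rpow_le_rpow ha ht.1.le hp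
  have hint : IntegrableOn (fun t : ℝ => t ^ p) (Ioo a b) :=
    ((Real.continuous_rpow_const hp).integrableOn_Icc).mono_set Ioo_subset_Icc_self
  have := setIntegral_ge_of_const_le_real measurableSet_Ioo (by simp [Real.volume_Ioo]) hle hint
  rwa [measureReal_def, Real.volume_Ioo, ENNReal.toReal_ofReal (sub_nonneg.2 hab),
    mul_comm] at this

theorem Ioo_add_subset_diff {x y r : ℝ} (hy : 0 ≤ y + r) (hxy : x ≤ y + 2 * r) :
    Ioo (y + r) (x + r) ⊆ (Ioo (x - r) (x + r) ∩ Ioi 0) \ (Ioo (y - r) (y + r) ∩ Ioi 0) :=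
  fun t ⟨hyt, htx⟩ =>
    ⟨⟨⟨by linarith, htx⟩, lt_of_le_of_lt hy hyt⟩, fun ⟨⟨_, hty⟩, _⟩ => (lt_asymm hyt hty).elim⟩

theorem mul_rpow_le_setIntegral_diff {p x y r : ℝ} (hp : 0 ≤ p) (hy : 0 ≤ y + r)
    (hyx : y ≤ x) (hxy : x ≤ y + 2 * r) :
    (x - y) * (y + r) ^ p ≤
      ∫ t in (Ioo (x - r) (x + r) ∩ Ioi 0) \ (Ioo (y - r) (y + r) ∩ Ioi 0), t ^ p := by
  have hint : IntegrableOn (fun t : ℝ => t ^ p)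
      ((Ioo (x - r) (x + r) ∩ Ioi 0) \ (Ioo (y - r) (y + r) ∩ Ioi 0)) :=
    ((Real.continuous_rpow_const hp).integrableOn_Icc (a := x - r) (b := x + r)).mono_set
      fun t ht => Ioo_subset_Icc_self ht.1.1
  calc (x - y) * (y + r) ^ p = (x + r - (y + r)) * (y + r) ^ p := by ring
    _ ≤ ∫ t in Ioo (y + r) (x + r), t ^ p :=
      mul_rpow_le_setIntegral_Ioo hp hy (by linarith)
    _ ≤ _ := setIntegral_mono_set hint
      (ae_restrict_of_forall_mem ((measurableSet_Ioo.inter measurableSet_Ioi).diff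
        (measurableSet_Ioo.inter measurableSet_Ioi)) fun t ht => Real.rpow_nonneg ht.1.2.le p)
      (Ioo_add_subset_diff hy hxy).eventuallyLE

theorem not_uniformly_continuous_measure (lam : ℝ) (hlam : 0 < lam) :
    (∀ N : ℝ, 0 ≤ N → (N + 1) ^ (2*lam) ≤ ∫ t in Ioo (N + 1) (N + 2), t ^ (2*lam)) ∧
    Tendsto (fun N : ℝ => ∫ t in Ioo (N + 1) (N + 2), t ^ (2*lam)) atTop atTop ∧
    ¬ ∃ C ε₀ : ℝ, 0 < C ∧ ε₀ ∈ Ioo (0:ℝ) 1 ∧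
      ∀ x y r : ℝ, 0 < x → 0 < y → 0 < r → |x - y| ≤ r → r ≤ 1 →
        (∫ t in (Ioo (x - r) (x + r) ∩ Ioi 0) \ (Ioo (y - r) (y + r) ∩ Ioi 0), t ^ (2*lam)) +
          (∫ t in (Ioo (y - r) (y + r) ∩ Ioi 0) \ (Ioo (x - r) (x + r) ∩ Ioi 0), t ^ (2*lam)) ≤
            C * (|x - y| / r) ^ ε₀ := by
  have hp : 0 ≤ 2 * lam := by positivity
  have hlower : ∀ N : ℝ, 0 ≤ N → (N + 1) ^ (2*lam) ≤ ∫ t in Ioo (N + 1) (N + 2), t ^ (2*lam) :=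
    fun N hN => by
      simpa [show N + 2 - (N + 1) = 1 by ring] using
        mul_rpow_le_setIntegral_Ioo hp (by linarith : 0 ≤ N + 1) (by linarith : N + 1 ≤ N + 2)
  have hgrowth : Tendsto (fun N : ℝ => (N + 1) ^ (2*lam)) atTop atTop :=
    (tendsto_rpow_atTop (by positivity)).comp (tendsto_atTop_add_const_right _ 1 tendsto_id)
  refine ⟨hlower, tendsto_atTop_mono' _ ((eventually_ge_atTop 0).mono hlower) hgrowth, ?_⟩
  rintro ⟨C, ε₀, -, -, hHolder⟩
  obtain ⟨N, hNC, hN⟩ := ((hgrowth.eventually_gt_atTop C).and (eventually_ge_atTop 1)).exists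
  have hbound := hHolder (N + 1) N 1 (by linarith) (by linarith) one_pos (by simp) le_rfl
  have hfirst := mul_rpow_le_setIntegral_diff (r := 1) hp (by linarith)
    (by linarith : N ≤ N + 1) (by linarith : N + 1 ≤ N + 2 * 1)
  have hsecond : 0 ≤ ∫ t in (Ioo (N - 1) (N + 1) ∩ Ioi 0) \ (Ioo (N + 1 - 1) (N + 1 + 1) ∩ Ioi 0),
      t ^ (2*lam) :=
    setIntegral_nonneg ((measurableSet_Ioo.inter measurableSet_Ioi).diff
      (measurableSet_Ioo.inter measurableSet_Ioi)) fun t ht => Real.rpow_nonneg ht.1.2.le _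
  simp only [add_sub_cancel_left, one_mul, abs_one, div_one, Real.one_rpow, mul_one] at hfirst hbound
  linarith
end

section
/- Let λ > 0 and 1 < p < ∞. If F ⊆ L^p((0,∞), x^{2λ}dx) is totally bounded, then: (a) F is bounded in norm; (b) for every ε > 0 there exists M > 0 such that ∫_M^∞ |f(x)|^p x^{2λ} dx < ε^p for all f ∈ F; (c) for every ε > 0 there exists ρ > 0 such that ∫_0^∞ |f(x+y) - f(x)|^p x^{2λ} dx < ε^p for all f ∈ F and all 0 < y < ρ. -/
open MeasureTheory Set

noncomputable def besselMeasure (lam : ℝ) : Measure ℝ :=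
  (volume.restrict (Set.Ioi (0:ℝ))).withDensity fun x => ENNReal.ofReal (x ^ (2*lam))

/-! Each single `f ∈ Lᵖ(x^{2λ} dx)` has small tails, by dominated convergence, and is continuous
under right translations: approximate it by a continuous compactly supported function and use that
for `y ≥ 0` the translation `f ↦ f(· + y)` does not increase the norm, the weight `x^{2λ}` being
increasing. Both the tail and the translation difference are Lipschitz in `f`, so on a totally
bounded set they become small uniformly, by passing to a finite net. -/

open Filter Topology
open scoped ENNReal

theorem TotallyBounded.eventually_forall_lt_of_tendsto {α ι : Type*} [PseudoEMetricSpace α]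
    {s : Set α} (hs : TotallyBounded s) {l : Filter ι} {N : ι → α → ℝ≥0∞} {K : ℝ≥0∞}
    (hK : K ≠ ∞) (hN : ∀ᶠ i in l, ∀ a b, N i a ≤ N i b + K * edist a b)
    (hN0 : ∀ a, Tendsto (N · a) l (𝓝 0)) {ε : ℝ≥0∞} (hε : 0 < ε) :
    ∀ᶠ i in l, ∀ a ∈ s, N i a < ε := by
  obtain ⟨δ, hδ, hδK⟩ := ENNReal.exists_pos_mul_lt hK (ENNReal.half_pos hε.ne').ne'
  obtain ⟨t, ht, hst⟩ := EMetric.totallyBounded_iff.1 hs δ hδ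
  have hnet : ∀ᶠ i in l, ∀ b ∈ t, N i b < ε / 2 :=
    ht.eventually_all.2 fun b _ => (hN0 b).eventually_lt_const (ENNReal.half_pos hε.ne')
  filter_upwards [hN, hnet] with i hNi hneti a ha
  obtain ⟨b, hb, hab⟩ := mem_iUnion₂.1 (hst ha)
  calc N i a ≤ N i b + K * edist a b := hNi a b
    _ < ε / 2 + ε / 2 := by
      refine ENNReal.add_lt_add (hneti b hb) (lt_of_le_of_lt ?_ hδK)
      rw [mul_comm]
      gcongr
      exact (Metric.mem_eball.1 hab).le
    _ = ε := ENNReal.add_halves ε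

section LpConvergence

variable {α E : Type*} [MeasurableSpace α] {μ : Measure α} [NormedAddCommGroup E] {p : ℝ≥0∞}

theorem tendsto_eLpNorm_of_dominated {ι : Type*} {l : Filter ι} [l.IsCountablyGenerated]
    (hp0 : p ≠ 0) (hp : p ≠ ∞) {F : ι → α → E} (bound : α → ℝ)
    (hF_meas : ∀ᶠ i in l, AEStronglyMeasurable (F i) μ)
    (h_bound : ∀ᶠ i in l, ∀ᵐ x ∂μ, ‖F i x‖ ≤ bound x) (h_int : MemLp bound p μ)
    (h_lim : ∀ᵐ x ∂μ, Tendsto (fun i => F i x) l (𝓝 0)) :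
    Tendsto (fun i => eLpNorm (F i) p μ) l (𝓝 0) := by
  have hp_pos : 0 < p.toReal := ENNReal.toReal_pos hp0 hp
  have h_lint : Tendsto (fun i => ∫⁻ x, ‖F i x‖ₑ ^ p.toReal ∂μ) l (𝓝 0) := by
    simpa using tendsto_lintegral_filter_of_dominated_convergence' (f := 0)
      (fun x => ‖bound x‖ₑ ^ p.toReal)
      (hF_meas.mono fun i hi => hi.enorm.pow_const _)
      (h_bound.mono fun i hi => hi.mono fun x hx => ENNReal.rpow_le_rpow
        (enorm_le_iff_norm_le.2 (hx.trans (Real.le_norm_self _))) hp_pos.le)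
      (lintegral_rpow_enorm_lt_top_of_eLpNorm_lt_top hp0 hp h_int.eLpNorm_lt_top).ne
      (h_lim.mono fun x hx => by
        simpa [Function.comp_def, hp_pos] using
          (((ENNReal.continuous_rpow_const (y := p.toReal)).comp continuous_enorm).tendsto
            (0 : E)).comp hx)
  simp_rw [eLpNorm_eq_lintegral_rpow_enorm_toReal hp0 hp]
  simpa [Function.comp_def, hp_pos] using
    ((ENNReal.continuous_rpow_const (y := 1 / p.toReal)).tendsto 0).comp h_lint

theorem MemLp.tendsto_eLpNorm_restrict_Ioi {μ : Measure ℝ} {f : ℝ → E} (hf : MemLp f p μ)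
    (hp0 : p ≠ 0) (hp : p ≠ ∞) :
    Tendsto (fun M => eLpNorm f p (μ.restrict (Ioi M))) atTop (𝓝 0) := by
  simp_rw [← eLpNorm_indicator_eq_eLpNorm_restrict measurableSet_Ioi]
  refine tendsto_eLpNorm_of_dominated hp0 hp (fun x => ‖f x‖)
    (Eventually.of_forall fun M => hf.1.indicator measurableSet_Ioi)
    (Eventually.of_forall fun M => ae_of_all _ fun x => norm_indicator_le_norm_self _ _) hf.norm
    (ae_of_all _ fun x => tendsto_const_nhds.congr' ?_)
  filter_upwards [eventually_ge_atTop x] with M hM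
  exact (indicator_of_notMem (not_lt.2 hM) f).symm

theorem HasCompactSupport.tendsto_eLpNorm_comp_add_right_sub {G : Type*} [NormedAddCommGroup G]
    [ProperSpace G] [MeasurableSpace G] [BorelSpace G] {μ : Measure G}
    [IsFiniteMeasureOnCompacts μ] {g : G → E} (hg : HasCompactSupport g) (hg_cont : Continuous g)
    (hp0 : p ≠ 0) (hp : p ≠ ∞) :
    Tendsto (fun y => eLpNorm (fun x => g (x + y) - g x) p μ) (𝓝 0) (𝓝 0) := by
  obtain ⟨C, hC⟩ := hg_cont.bounded_above_of_compact_support hg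
  set K := Metric.cthickening 1 (tsupport g)
  have hK : IsCompact K := hg.isCompact.cthickening
  refine tendsto_eLpNorm_of_dominated hp0 hp (K.indicator fun _ => 2 * C)
    (Eventually.of_forall fun y =>
      ((hg_cont.comp (continuous_add_const y)).sub hg_cont).aestronglyMeasurable) ?_
    (memLp_indicator_const p hK.measurableSet _ (Or.inr hK.measure_lt_top.ne))
    (ae_of_all _ fun x => ?_)
  · filter_upwards [Metric.closedBall_mem_nhds (0 : G) one_pos] with y hy
    refine ae_of_all _ fun x => ?_
    by_cases hx : x ∈ K
    · rw [indicator_of_mem hx, two_mul]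
      exact (norm_sub_le _ _).trans (add_le_add (hC _) (hC _))
    · have hx' : x ∉ tsupport g := fun h => hx (Metric.self_subset_cthickening _ h)
      have hxy : x + y ∉ tsupport g := fun h =>
        hx (Metric.mem_cthickening_of_dist_le _ _ _ _ h (by simpa using hy))
      simp [image_eq_zero_of_notMem_tsupport hx', image_eq_zero_of_notMem_tsupport hxy,
        indicator_of_notMem hx]
  · rw [tendsto_sub_nhds_zero_iff]
    exact (hg_cont.comp (continuous_const_add x)).tendsto' 0 (g x) (by simp)

theorem Lp.eLpNorm_restrict_le_add_edist [Fact (1 ≤ p)] (f g : Lp E p μ) (s : Set α) :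
    eLpNorm f p (μ.restrict s) ≤ eLpNorm g p (μ.restrict s) + edist f g := by
  calc eLpNorm f p (μ.restrict s) = eLpNorm (⇑g + (⇑f - ⇑g)) p (μ.restrict s) := by
        rw [add_sub_cancel]
    _ ≤ eLpNorm g p (μ.restrict s) + eLpNorm (⇑f - ⇑g) p (μ.restrict s) :=
        eLpNorm_add_le (Lp.aestronglyMeasurable g).restrict
          ((Lp.aestronglyMeasurable f).sub (Lp.aestronglyMeasurable g)).restrict Fact.out
    _ ≤ eLpNorm g p (μ.restrict s) + edist f g := by
        rw [Lp.edist_def]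
        exact add_le_add le_rfl (eLpNorm_mono_measure _ Measure.restrict_le_self)

end LpConvergence

theorem integral_abs_rpow_lt_of_eLpNorm_lt {α : Type*} [MeasurableSpace α] {ν : Measure α}
    {p ε : ℝ} (hp : 0 < p) {h : α → ℝ} (hh : AEStronglyMeasurable h ν)
    (hlt : eLpNorm h (ENNReal.ofReal p) ν < ENNReal.ofReal ε) :
    ∫ x, |h x| ^ p ∂ν < ε ^ p := by
  have hmem : MemLp h (ENNReal.ofReal p) ν := ⟨hh, hlt.trans ENNReal.ofReal_lt_top⟩
  rw [hmem.eLpNorm_eq_integral_rpow_norm (ENNReal.ofReal_pos.2 hp).ne' ENNReal.ofReal_ne_top,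
    ENNReal.ofReal_lt_ofReal_iff', ENNReal.toReal_ofReal hp.le] at hlt
  simp only [Real.norm_eq_abs] at hlt
  calc ∫ x, |h x| ^ p ∂ν = ((∫ x, |h x| ^ p ∂ν) ^ p⁻¹) ^ p :=
        (Real.rpow_inv_rpow (integral_nonneg fun _ => by positivity) hp.ne').symm
    _ < ε ^ p := Real.rpow_lt_rpow (by positivity) hlt.1 hp

section Bessel

variable {lam : ℝ} {E : Type*} [NormedAddCommGroup E] {p : ℝ≥0∞}

theorem isLocallyFiniteMeasure_besselMeasure (hlam : 0 ≤ lam) :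
    IsLocallyFiniteMeasure (besselMeasure lam) :=
  IsLocallyFiniteMeasure.withDensity_ofReal (Real.continuous_rpow_const (by linarith))

theorem lintegral_comp_add_right_besselMeasure_le (hlam : 0 ≤ lam) {y : ℝ} (hy : 0 ≤ y)
    (G : ℝ → ℝ≥0∞) :
    ∫⁻ x, G (x + y) ∂besselMeasure lam ≤ ∫⁻ x, G x ∂besselMeasure lam := by
  set w : ℝ → ℝ≥0∞ := fun x => ENNReal.ofReal (x ^ (2 * lam))
  have hw : Measurable w := by fun_prop
  have hμ (H : ℝ → ℝ≥0∞) : ∫⁻ x, H x ∂besselMeasure lam = ∫⁻ x in Ioi 0, w x * H x :=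
    lintegral_withDensity_eq_lintegral_mul_non_measurable _ hw
      (ae_of_all _ fun _ => ENNReal.ofReal_lt_top) H
  set H := (Ioi (0:ℝ)).indicator fun x => w x * G x
  calc ∫⁻ x, G (x + y) ∂besselMeasure lam = ∫⁻ x in Ioi 0, w x * G (x + y) := hμ _
    _ ≤ ∫⁻ x in Ioi 0, H (x + y) := by
        refine setLIntegral_mono' measurableSet_Ioi fun x (hx : 0 < x) => ?_
        rw [show H (x + y) = w (x + y) * G (x + y) from
          indicator_of_mem (mem_Ioi.2 (by linarith)) _]
        gcongr
        exact ENNReal.ofReal_le_ofReal (Real.rpow_le_rpow hx.le (by linarith) (by linarith))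
    _ ≤ ∫⁻ x, H (x + y) := setLIntegral_le_lintegral _ _
    _ = ∫⁻ x, H x := lintegral_add_right_eq_self H y
    _ = ∫⁻ x, G x ∂besselMeasure lam := by rw [lintegral_indicator measurableSet_Ioi, hμ]

theorem eLpNorm_comp_add_right_besselMeasure_le (hlam : 0 ≤ lam) {y : ℝ} (hy : 0 ≤ y)
    (hp0 : p ≠ 0) (hp : p ≠ ∞) (h : ℝ → E) :
    eLpNorm (fun x => h (x + y)) p (besselMeasure lam) ≤ eLpNorm h p (besselMeasure lam) := by
  simp_rw [eLpNorm_eq_lintegral_rpow_enorm_toReal hp0 hp]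
  exact ENNReal.rpow_le_rpow
    (lintegral_comp_add_right_besselMeasure_le hlam hy fun x => ‖h x‖ₑ ^ p.toReal) (by positivity)

theorem eLpNorm_comp_add_right_sub_besselMeasure_le [Fact (1 ≤ p)] (hlam : 0 ≤ lam) {y : ℝ}
    (hy : 0 ≤ y) (hp : p ≠ ∞) {f g : ℝ → E} (hf : StronglyMeasurable f)
    (hg : StronglyMeasurable g) :
    eLpNorm (fun x => f (x + y) - f x) p (besselMeasure lam)
      ≤ eLpNorm (fun x => g (x + y) - g x) p (besselMeasure lam)
        + 2 * eLpNorm (f - g) p (besselMeasure lam) := by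
  have hp0 : p ≠ 0 := (zero_lt_one.trans_le Fact.out).ne'
  have hτ : Measurable fun x : ℝ => x + y := measurable_add_const y
  have hfg : StronglyMeasurable (f - g) := hf.sub hg
  calc eLpNorm (fun x => f (x + y) - f x) p (besselMeasure lam)
      = eLpNorm ((fun x => g (x + y) - g x) + ((fun x => (f - g) (x + y)) - (f - g))) p
          (besselMeasure lam) := by
        congr 1; ext x; simp only [Pi.add_apply, Pi.sub_apply]; abel
    _ ≤ eLpNorm (fun x => g (x + y) - g x) p (besselMeasure lam)
          + (eLpNorm (fun x => (f - g) (x + y)) p (besselMeasure lam)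
            + eLpNorm (f - g) p (besselMeasure lam)) := by
        refine (eLpNorm_add_le ?_ ?_ Fact.out).trans (add_le_add le_rfl ?_)
        · exact ((hg.comp_measurable hτ).sub hg).aestronglyMeasurable
        · exact ((hfg.comp_measurable hτ).sub hfg).aestronglyMeasurable
        · exact eLpNorm_sub_le (hfg.comp_measurable hτ).aestronglyMeasurable
            hfg.aestronglyMeasurable Fact.out
    _ ≤ eLpNorm (fun x => g (x + y) - g x) p (besselMeasure lam)
          + 2 * eLpNorm (f - g) p (besselMeasure lam) := by
        rw [two_mul]
        gcongr
        exact eLpNorm_comp_add_right_besselMeasure_le hlam hy hp0 hp _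

theorem Lp.tendsto_eLpNorm_comp_add_right_sub_besselMeasure [NormedSpace ℝ E] [Fact (1 ≤ p)]
    (hlam : 0 ≤ lam) (hp : p ≠ ∞) (f : Lp E p (besselMeasure lam)) :
    Tendsto (fun y => eLpNorm (fun x => f (x + y) - f x) p (besselMeasure lam))
      (𝓝[≥] 0) (𝓝 0) := by
  have := isLocallyFiniteMeasure_besselMeasure hlam
  have hp0 : p ≠ 0 := (zero_lt_one.trans_le Fact.out).ne'
  refine ENNReal.tendsto_nhds_zero.2 fun ε hε => ?_
  have hε3 : ε / 3 ≠ 0 := (ENNReal.div_pos hε.ne' ENNReal.ofNat_ne_top).ne'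
  obtain ⟨g, hg, hfg, hg_cont, -⟩ :=
    MemLp.exists_hasCompactSupport_eLpNorm_sub_le hp (Lp.memLp f) hε3
  have hg_small := ENNReal.tendsto_nhds_zero.1
    (hg.tendsto_eLpNorm_comp_add_right_sub (μ := besselMeasure lam) hg_cont hp0 hp) _
    (pos_iff_ne_zero.2 hε3)
  filter_upwards [self_mem_nhdsWithin, nhdsWithin_le_nhds hg_small] with y (hy : 0 ≤ y) hgy
  calc eLpNorm (fun x => f (x + y) - f x) p (besselMeasure lam)
      ≤ eLpNorm (fun x => g (x + y) - g x) p (besselMeasure lam)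
        + 2 * eLpNorm (⇑f - g) p (besselMeasure lam) :=
        eLpNorm_comp_add_right_sub_besselMeasure_le hlam hy hp (Lp.stronglyMeasurable f)
          hg_cont.stronglyMeasurable
    _ ≤ ε / 3 + 2 * (ε / 3) := by gcongr
    _ = ε := by rw [two_mul, ← add_assoc, ENNReal.add_thirds]

end Bessel

theorem totallyBounded_necessary (lam p : ℝ) (hlam : 0 < lam) (hp : 1 < p)
    [Fact ((1 : ENNReal) ≤ ENNReal.ofReal p)]
    (F : Set (Lp ℝ (ENNReal.ofReal p) (besselMeasure lam)))
    (hF : TotallyBounded F) :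
    (∃ C : ℝ, ∀ f ∈ F, ‖f‖ ≤ C) ∧
    (∀ ε > (0:ℝ), ∃ M > (0:ℝ), ∀ f ∈ F,
      (∫ x in Set.Ioi M, |(f : ℝ → ℝ) x| ^ p ∂(besselMeasure lam)) < ε ^ p) ∧
    (∀ ε > (0:ℝ), ∃ ρ > (0:ℝ), ∀ f ∈ F, ∀ y : ℝ, 0 < y → y < ρ →
      (∫ x, |(f : ℝ → ℝ) (x + y) - (f : ℝ → ℝ) x| ^ p ∂(besselMeasure lam)) < ε ^ p) := by
  have hp0 : 0 < p := zero_lt_one.trans hp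
  have hq0 : ENNReal.ofReal p ≠ 0 := (ENNReal.ofReal_pos.2 hp0).ne'
  refine ⟨isBounded_iff_forall_norm_le.1 hF.isBounded, fun ε hε => ?_, fun ε hε => ?_⟩
  · have htail := hF.eventually_forall_lt_of_tendsto ENNReal.one_ne_top
      (Eventually.of_forall fun M f g => by
        simpa using Lp.eLpNorm_restrict_le_add_edist f g (Ioi M))
      (fun f => MemLp.tendsto_eLpNorm_restrict_Ioi (Lp.memLp f) hq0 ENNReal.ofReal_ne_top)
      (ENNReal.ofReal_pos.2 hε)
    obtain ⟨M, hMF, hM⟩ := (htail.and (eventually_gt_atTop 0)).exists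
    exact ⟨M, hM, fun f hf =>
      integral_abs_rpow_lt_of_eLpNorm_lt hp0 (Lp.aestronglyMeasurable f).restrict (hMF f hf)⟩
  · have hshift := hF.eventually_forall_lt_of_tendsto (K := 2) ENNReal.ofNat_ne_top
      (eventually_nhdsWithin_of_forall fun y (hy : 0 ≤ y) f g => by
        simpa [Lp.edist_def] using eLpNorm_comp_add_right_sub_besselMeasure_le hlam.le hy
          ENNReal.ofReal_ne_top (Lp.stronglyMeasurable f) (Lp.stronglyMeasurable g))
      (Lp.tendsto_eLpNorm_comp_add_right_sub_besselMeasure hlam.le ENNReal.ofReal_ne_top)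
      (ENNReal.ofReal_pos.2 hε)
    obtain ⟨ρ, hρ, hρF⟩ := mem_nhdsGE_iff_exists_Ico_subset.1 hshift
    refine ⟨ρ, hρ, fun f hf y hy hyρ => integral_abs_rpow_lt_of_eLpNorm_lt hp0 ?_
      (hρF ⟨hy.le, hyρ⟩ f hf)⟩
    exact ((Lp.stronglyMeasurable f).comp_measurable (measurable_add_const y)).sub
      (Lp.stronglyMeasurable f) |>.aestronglyMeasurable
end
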